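/- arXiv:2305.10664 — 3 statements merged into one kernel-verified Lean document; each statement's English description precedes it below -/
import Mathlib

section
/- Let n, L be positive integers, α ∈ (0,2), σ > 0, ν > 0, let q_1,…,q_L be nonnegative reals, let τ_1,…,τ_L be vectors in ℝ^n with entries in {−1,+1}, and let μ be a probability measure on [0,∞) whose Laplace transform satisfies ∫_0^∞ exp(−λ t) dμ(t) = exp(−λ^{α/2}) for all λ ≥ 0. For s = (s_1,…,s_L) ∈ (0,∞)^L define the n×n matrix Q(s) = σ²·I + ν Σ_{ℓ=1}^L s_ℓ q_ℓ^{2/α} τ_ℓ τ_ℓᵀ. Then for every t ∈ ℝ^n, ∫_{(0,∞)^L} exp(−(1/2) tᵀQ(s)t) dμ^{⊗L}(s) = exp(−(1/2)σ²‖t‖² − (ν/2)^{α/2} Σ_{ℓ=1}^L q_ℓ |⟨t, τ_ℓ⟩|^α), where μ^{⊗L} is the L-fold product of μ. -/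
/-!
The quadratic form splits as `tᵀQ(s)t = σ²‖t‖² + 2 ∑ₗ aₗ sₗ` with
`aₗ = (ν/2) qₗ^{2/α} ⟨t,τₗ⟩²`, so the integrand factorizes over the coordinates of `s` and, by
Fubini, the integral is `exp(-σ²‖t‖²/2)` times a product of Laplace transforms of `μ` at the
points `aₗ`, each equal to `exp(-aₗ^{α/2}) = exp(-(ν/2)^{α/2} qₗ |⟨t,τₗ⟩|^α)`.
Restricting to `(0,∞)^L` changes nothing: since `exp(-l x) ≥ 1` on `(-∞,0]`, a Laplace transform
tending to `0` as `l → ∞` forces `μ` to put no mass there.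
-/

open Matrix MeasureTheory Real Filter Topology

theorem measure_Iic_zero_eq_zero_of_tendsto_laplace {μ : Measure ℝ} [IsFiniteMeasure μ]
    (hint : ∀ l : ℝ, 0 ≤ l → Integrable (fun x => exp (-l * x)) μ)
    (hlim : Tendsto (fun l => ∫ x, exp (-l * x) ∂μ) atTop (𝓝 0)) :
    μ (Set.Iic 0) = 0 := by
  have hbound (l : ℝ) (hl : 0 ≤ l) : μ.real (Set.Iic 0) ≤ ∫ x, exp (-l * x) ∂μ :=
    calc μ.real (Set.Iic 0) = 1 * μ.real (Set.Iic 0) := (one_mul _).symm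
      _ ≤ ∫ x in Set.Iic 0, exp (-l * x) ∂μ :=
        setIntegral_ge_of_const_le_real measurableSet_Iic (measure_ne_top _ _)
          (fun x hx => one_le_exp (by nlinarith [Set.mem_Iic.mp hx])) (hint l hl).integrableOn
      _ ≤ ∫ x, exp (-l * x) ∂μ :=
        setIntegral_le_integral (hint l hl) (.of_forall fun x => (exp_pos _).le)
  have hle : μ.real (Set.Iic 0) ≤ 0 := ge_of_tendsto hlim (eventually_atTop.mpr ⟨0, hbound⟩)
  exact (measureReal_eq_zero_iff (measure_ne_top _ _)).mp (hle.antisymm measureReal_nonneg)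

theorem ae_pos_of_integral_exp_neg_mul_eq_exp_neg_rpow {μ : Measure ℝ} [IsFiniteMeasure μ]
    {p : ℝ} (hp : 0 < p) (hLap : ∀ l : ℝ, 0 ≤ l → ∫ x, exp (-l * x) ∂μ = exp (-l ^ p)) :
    ∀ᵐ x ∂μ, 0 < x := by
  have hint (l : ℝ) (hl : 0 ≤ l) : Integrable (fun x => exp (-l * x)) μ :=
    .of_integral_ne_zero (by rw [hLap l hl]; exact (exp_pos _).ne')
  have hlim : Tendsto (fun l => ∫ x, exp (-l * x) ∂μ) atTop (𝓝 0) :=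
    (tendsto_exp_atBot.comp (tendsto_neg_atTop_atBot.comp (tendsto_rpow_atTop hp))).congr'
      (eventually_atTop.mpr ⟨0, fun l hl => (hLap l hl).symm⟩)
  refine ae_iff.mpr ?_
  simp only [not_lt]
  exact measure_Iic_zero_eq_zero_of_tendsto_laplace hint hlim

theorem integral_pi_exp_neg_sum_mul {ι : Type*} [Fintype ι] (μ : Measure ℝ) [SigmaFinite μ]
    (a : ι → ℝ) :
    ∫ s, exp (-∑ ℓ, a ℓ * s ℓ) ∂(Measure.pi fun _ : ι => μ) = ∏ ℓ, ∫ x, exp (-a ℓ * x) ∂μ := by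
  simp_rw [← Finset.sum_neg_distrib, exp_sum, neg_mul]
  exact integral_fintype_prod_eq_prod (fun ℓ x => exp (-(a ℓ * x)))

section QuadraticForm

variable {ι m R : Type*} [Fintype ι] [Fintype m] [CommRing R]

theorem dotProduct_vecMulVec_self_mulVec (u t : m → R) :
    t ⬝ᵥ vecMulVec u u *ᵥ t = (t ⬝ᵥ u) ^ 2 := by
  rw [vecMulVec_mulVec, op_smul_eq_smul, dotProduct_smul, smul_eq_mul, dotProduct_comm u, sq]

theorem dotProduct_smul_one_add_smul_sum_vecMulVec_mulVec [DecidableEq m] (c ν : R) (w : ι → R)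
    (u : ι → m → R) (t : m → R) :
    t ⬝ᵥ (c • 1 + ν • ∑ ℓ, w ℓ • vecMulVec (u ℓ) (u ℓ)) *ᵥ t =
      c * (t ⬝ᵥ t) + ν * ∑ ℓ, w ℓ * (t ⬝ᵥ u ℓ) ^ 2 := by
  simp only [add_mulVec, smul_mulVec, one_mulVec, sum_mulVec, dotProduct_add, dotProduct_smul,
    dotProduct_sum, dotProduct_vecMulVec_self_mulVec, smul_eq_mul]

end QuadraticForm

theorem mul_rpow_two_div_mul_sq_rpow_div_two {α c q : ℝ} (hα : α ≠ 0) (hc : 0 ≤ c) (hq : 0 ≤ q)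
    (d : ℝ) : (c * (q ^ (2 / α) * d ^ 2)) ^ (α / 2) = c ^ (α / 2) * (q * |d| ^ α) := by
  have hq_exp : 2 / α * (α / 2) = 1 := by field_simp
  have hd_exp : ((2 : ℕ) : ℝ) * (α / 2) = α := by push_cast; ring
  rw [← sq_abs, ← rpow_natCast, mul_rpow hc (by positivity), mul_rpow (by positivity)
    (by positivity), ← rpow_mul hq, ← rpow_mul (abs_nonneg d), hq_exp, hd_exp, rpow_one]

theorem stable_mixture_charfun_integral_general (n L : ℕ)
    (α σ ν : ℝ) (hα₀ : 0 < α) (hν : 0 < ν)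
    (q : Fin L → ℝ) (hq : ∀ ℓ, 0 ≤ q ℓ)
    (τ : Fin L → Fin n → ℝ)
    (μ : Measure ℝ) [IsProbabilityMeasure μ]
    (hLap : ∀ l : ℝ, 0 ≤ l → ∫ t, Real.exp (-l * t) ∂μ = Real.exp (-l ^ (α / 2)))
    (Q : (Fin L → ℝ) → Matrix (Fin n) (Fin n) ℝ)
    (hQ : ∀ s, Q s = σ ^ 2 • (1 : Matrix (Fin n) (Fin n) ℝ) +
      ν • ∑ ℓ : Fin L, (s ℓ * q ℓ ^ ((2 : ℝ) / α)) •
        Matrix.of (fun i j : Fin n => τ ℓ i * τ ℓ j))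
    (t : Fin n → ℝ) :
    (∫ s in {s : Fin L → ℝ | ∀ ℓ, 0 < s ℓ},
        Real.exp (-(1 / 2) * (t ⬝ᵥ Q s *ᵥ t)) ∂(Measure.pi fun _ : Fin L => μ)) =
      Real.exp (-(1 / 2) * σ ^ 2 * ∑ j, t j ^ 2 -
        (ν / 2) ^ (α / 2) * ∑ ℓ, q ℓ * |∑ j, t j * τ ℓ j| ^ α) := by
  have hpos := ae_pos_of_integral_exp_neg_mul_eq_exp_neg_rpow (by positivity) hLap
  have hfull : ∀ᵐ s ∂(Measure.pi fun _ : Fin L => μ), s ∈ {s : Fin L → ℝ | ∀ ℓ, 0 < s ℓ} :=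
    ae_all_iff.mpr fun ℓ => Measure.tendsto_eval_ae_ae.eventually hpos
  rw [Measure.restrict_eq_self_of_ae_mem hfull]
  set a : Fin L → ℝ := fun ℓ => ν / 2 * (q ℓ ^ (2 / α) * (t ⬝ᵥ τ ℓ) ^ 2)
  have hform (s : Fin L → ℝ) :
      -(1 / 2) * (t ⬝ᵥ Q s *ᵥ t) = -(1 / 2) * σ ^ 2 * ∑ j, t j ^ 2 + -∑ ℓ, a ℓ * s ℓ := by
    have hvec (ℓ : Fin L) : Matrix.of (fun i j => τ ℓ i * τ ℓ j) = vecMulVec (τ ℓ) (τ ℓ) := rfl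
    have hsq : t ⬝ᵥ t = ∑ j, t j ^ 2 := by simp only [dotProduct, sq]
    simp only [hQ, hvec]
    rw [dotProduct_smul_one_add_smul_sum_vecMulVec_mulVec, hsq, mul_add, ← mul_assoc]
    congr 1
    rw [Finset.mul_sum, Finset.mul_sum, ← Finset.sum_neg_distrib]
    exact Finset.sum_congr rfl fun ℓ _ => by ring
  have hLap_a (ℓ : Fin L) : ∫ x, exp (-a ℓ * x) ∂μ =
      exp (-((ν / 2) ^ (α / 2) * (q ℓ * |∑ j, t j * τ ℓ j| ^ α))) := by
    rw [hLap _ (mul_nonneg (by positivity) (mul_nonneg (rpow_nonneg (hq ℓ) _) (sq_nonneg _))),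
      mul_rpow_two_div_mul_sq_rpow_div_two hα₀.ne' (by positivity) (hq ℓ)]
    rfl
  simp only [hform, exp_add, integral_const_mul, integral_pi_exp_neg_sum_mul, hLap_a]
  simp only [← exp_sum, ← exp_add, Finset.mul_sum, Finset.sum_neg_distrib, sub_eq_add_neg]

/-- The Laplace functional of the random covariance matrix `Q(s)`: for every `t ∈ ℝⁿ`,
`∫_{(0,∞)^L} exp(−(1/2) tᵀQ(s)t) dμ^{⊗L}(s)
  = exp(−(1/2)σ²‖t‖² − (ν/2)^{α/2} ∑ₗ qₗ |⟨t,τₗ⟩|^α)`. -/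
theorem stable_mixture_charfun_integral (n L : ℕ) (hn : 0 < n) (hL : 0 < L)
    (α σ ν : ℝ) (hα₀ : 0 < α) (hα₂ : α < 2) (hσ : 0 < σ) (hν : 0 < ν)
    (q : Fin L → ℝ) (hq : ∀ ℓ, 0 ≤ q ℓ)
    (τ : Fin L → Fin n → ℝ) (hτ : ∀ ℓ j, τ ℓ j = 1 ∨ τ ℓ j = -1)
    (μ : Measure ℝ) [IsProbabilityMeasure μ] (hsupp : μ (Set.Iio 0) = 0)
    (hLap : ∀ l : ℝ, 0 ≤ l → ∫ t, Real.exp (-l * t) ∂μ = Real.exp (-l ^ (α / 2)))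
    (Q : (Fin L → ℝ) → Matrix (Fin n) (Fin n) ℝ)
    (hQ : ∀ s, Q s = σ ^ 2 • (1 : Matrix (Fin n) (Fin n) ℝ) +
      ν • ∑ ℓ : Fin L, (s ℓ * q ℓ ^ ((2 : ℝ) / α)) •
        Matrix.of (fun i j : Fin n => τ ℓ i * τ ℓ j))
    (t : Fin n → ℝ) :
    (∫ s in {s : Fin L → ℝ | ∀ ℓ, 0 < s ℓ},
        Real.exp (-(1 / 2) * (t ⬝ᵥ Q s *ᵥ t)) ∂(Measure.pi fun _ : Fin L => μ)) =
      Real.exp (-(1 / 2) * σ ^ 2 * ∑ j, t j ^ 2 -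
        (ν / 2) ^ (α / 2) * ∑ ℓ, q ℓ * |∑ j, t j * τ ℓ j| ^ α) :=
  stable_mixture_charfun_integral_general n L α σ ν hα₀ hν q hq τ μ hLap Q hQ t
end

section
/- Let n be a positive integer, α ∈ (0,2], ν > 0, and t ∈ ℝ^n. For each positive integer p, let G^{(p)}_1,…,G^{(p)}_p be independent, identically distributed random vectors in ℝ^n with coordinates bounded in absolute value by 1 and with common law equal to that of a fixed random vector G, and let w^{(p)}_1,…,w^{(p)}_p be independent, identically distributed real random variables, with (w^{(p)}_1,…,w^{(p)}_p, G^{(p)}_1,…,G^{(p)}_p) jointly independent, such that E[exp(i u w^{(p)}_1)] = exp(−((ν/2)^{α/2}/p)·|u|^α) for all u ∈ ℝ. Then lim_{p→∞} E[ exp( i ⟨t, Σ_{j=1}^p w^{(p)}_j G^{(p)}_j⟩ ) ] = exp( −(ν/2)^{α/2} · E[ |⟨t, G⟩|^α ] ). -/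
/-!
Conditionally on the features, the summands `w_j ⟨t, G_j⟩` are independent with characteristic
functions `exp (-(c / p) |⟨t, G_j⟩|^α)`, where `c = (ν/2)^{α/2}`. Hence the characteristic
function at width `p` equals `M(1/p)^p`, where `M` is the moment generating function of the
bounded variable `Y = -c |⟨t, G₀⟩|^α`. As `M(1/p) = 1 + E[Y]/p + O(1/p²)`, the `p`-th powers
converge to `exp E[Y]`.
-/

open MeasureTheory ProbabilityTheory Filter Topology

section

variable {Ω : Type*} [MeasurableSpace Ω] {μ : Measure Ω}

lemma iIndepFun.indepFun_sum_inl_inr {ι κ : Type*} {β : ι ⊕ κ → Type*}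
    {m : ∀ i, MeasurableSpace (β i)} {f : ∀ i, Ω → β i} (h : iIndepFun f μ)
    (hf : ∀ i, Measurable (f i)) :
    IndepFun (fun ω i ↦ f (.inl i) ω) (fun ω j ↦ f (.inr j) ω) μ := by
  have hblocks := indep_iSup_of_disjoint (fun i ↦ (hf i).comap_le) h
    Set.isCompl_range_inl_range_inr.disjoint
  rw [iSup_range, iSup_range] at hblocks
  rw [IndepFun_iff_Indep]
  simp only [MeasurableSpace.pi, MeasurableSpace.comap_iSup, MeasurableSpace.comap_comp]
  exact hblocks

lemma integral_cexp_sum_mul_eq_prod_integral_charFun {ι : Type*} [Fintype ι]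
    {W S : ι → Ω → ℝ} (hWm : ∀ j, Measurable (W j)) (hSm : ∀ j, Measurable (S j))
    (hW : iIndepFun W μ) (hS : iIndepFun S μ)
    (hWS : IndepFun (fun ω j ↦ W j ω) (fun ω j ↦ S j ω) μ) :
    ∫ ω, Complex.exp (Complex.I * ↑(∑ j, W j ω * S j ω)) ∂μ =
      ∏ j, ∫ ω, charFun (μ.map (W j)) (S j ω) ∂μ := by
  have := hW.isProbabilityMeasure
  have hWvm : Measurable fun ω j ↦ W j ω := measurable_pi_lambda _ hWm
  have hSvm : Measurable fun ω j ↦ S j ω := measurable_pi_lambda _ hSm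
  let F : (ι → ℝ) × (ι → ℝ) → ℂ := fun z ↦ ∏ j, Complex.exp (Complex.I * ↑(z.1 j * z.2 j))
  have hFm : Measurable F := by fun_prop
  have hF_int : Integrable F ((μ.map fun ω j ↦ W j ω).prod (μ.map fun ω j ↦ S j ω)) :=
    Integrable.of_bound hFm.aestronglyMeasurable 1 (ae_of_all _ fun z ↦ by
      simp only [F, norm_prod, Complex.norm_exp_I_mul_ofReal, Finset.prod_const_one, le_refl])
  have charFun_eq (j : ι) (u : ℝ) :
      ∫ ω, Complex.exp (Complex.I * ↑(W j ω * u)) ∂μ = charFun (μ.map (W j)) u := by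
    rw [charFun_apply_real, integral_map (hWm j).aemeasurable (by fun_prop)]
    congr with ω
    push_cast
    ring_nf
  calc ∫ ω, Complex.exp (Complex.I * ↑(∑ j, W j ω * S j ω)) ∂μ
      = ∫ ω, F ((fun ω j ↦ W j ω) ω, (fun ω j ↦ S j ω) ω) ∂μ := by
        congr with ω
        simp only [F, Complex.ofReal_sum, Finset.mul_sum, Complex.exp_sum]
    _ = ∫ z, F z ∂((μ.map fun ω j ↦ W j ω).prod (μ.map fun ω j ↦ S j ω)) := by
        rw [← (indepFun_iff_map_prod_eq_prod_map_map hWvm.aemeasurable hSvm.aemeasurable).mp hWS,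
          integral_map (hWvm.prodMk hSvm).aemeasurable hFm.aestronglyMeasurable]
    _ = ∫ s, ∫ x, F (x, s) ∂(μ.map fun ω j ↦ W j ω) ∂(μ.map fun ω j ↦ S j ω) :=
        integral_prod_symm F hF_int
    _ = ∫ s, ∏ j, charFun (μ.map (W j)) (s j) ∂(μ.map fun ω j ↦ S j ω) := by
        congr with s
        rw [integral_map hWvm.aemeasurable (by fun_prop)]
        refine (hW.integral_fun_prod_comp (f := fun j u ↦ Complex.exp (Complex.I * ↑(u * s j)))
          (fun j ↦ (hWm j).aemeasurable) fun j ↦ by fun_prop).trans ?_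
        exact Finset.prod_congr rfl fun j _ ↦ charFun_eq j (s j)
    _ = ∫ ω, ∏ j, charFun (μ.map (W j)) (S j ω) ∂μ :=
        integral_map hSvm.aemeasurable (Finset.measurable_prod _ fun j _ ↦
          measurable_charFun.comp (measurable_pi_apply j)).aestronglyMeasurable
    _ = ∏ j, ∫ ω, charFun (μ.map (W j)) (S j ω) ∂μ :=
        hS.integral_fun_prod_comp (fun j ↦ (hSm j).aemeasurable) fun j ↦ by fun_prop

lemma integral_cexp_sum_mul_comp_eq_pow {ι E Ω' : Type*} [Fintype ι]
    [MeasurableSpace E] [MeasurableSpace Ω'] {ν : Measure Ω'} {W : ι → Ω → ℝ} {G : ι → Ω → E}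
    {G₀ : Ω' → E} {s : E → ℝ} {ψ : ℝ → ℝ} (hWm : ∀ j, Measurable (W j))
    (hGm : ∀ j, Measurable (G j)) (hs : Measurable s) (hψ : Measurable ψ)
    (hW : iIndepFun W μ) (hG : iIndepFun G μ)
    (hWG : IndepFun (fun ω j ↦ W j ω) (fun ω j ↦ G j ω) μ)
    (hident : ∀ j, IdentDistrib (G j) G₀ μ ν)
    (hchar : ∀ j (u : ℝ), ∫ ω, Complex.exp (Complex.I * u * W j ω) ∂μ = ψ u) :
    ∫ ω, Complex.exp (Complex.I * ↑(∑ j, W j ω * s (G j ω))) ∂μ =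
      ↑((∫ ω, ψ (s (G₀ ω)) ∂ν) ^ Fintype.card ι) := by
  have hWS : IndepFun (fun ω j ↦ W j ω) (fun ω j ↦ s (G j ω)) μ :=
    hWG.comp (ψ := fun (g : ι → E) j ↦ s (g j)) measurable_id (by fun_prop)
  rw [integral_cexp_sum_mul_eq_prod_integral_charFun (S := fun j ω ↦ s (G j ω)) hWm
    (fun j ↦ hs.comp (hGm j)) hW (hG.comp _ fun _ ↦ hs) hWS]
  have charFun_W (j : ι) (u : ℝ) : charFun (μ.map (W j)) u = ψ u := by
    rw [charFun_apply_real, integral_map (hWm j).aemeasurable (by fun_prop), ← hchar j u]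
    congr with ω
    ring_nf
  have hlaw (j : ι) : ∫ ω, ψ (s (G j ω)) ∂μ = ∫ ω, ψ (s (G₀ ω)) ∂ν :=
    ((hident j).comp (hψ.comp hs)).integral_eq
  simp only [charFun_W, integral_complex_ofReal, hlaw, Finset.prod_const, Finset.card_univ,
    Complex.ofReal_pow]

lemma abs_mgf_sub_one_sub_mul_integral_le [IsProbabilityMeasure μ] {Y : Ω → ℝ}
    (hYm : AEStronglyMeasurable Y μ) {M : ℝ} (hY : ∀ᵐ ω ∂μ, |Y ω| ≤ M) {t : ℝ}
    (ht : |t| * M ≤ 1) :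
    |mgf Y μ t - 1 - t * μ[Y]| ≤ (|t| * M) ^ 2 := by
  have htY : ∀ᵐ ω ∂μ, |t * Y ω| ≤ |t| * M := by
    filter_upwards [hY] with ω hω
    rw [abs_mul]
    exact mul_le_mul_of_nonneg_left hω (abs_nonneg t)
  have hexp_int : Integrable (fun ω ↦ Real.exp (t * Y ω)) μ := by
    refine Integrable.of_bound (by fun_prop) (Real.exp (|t| * M)) ?_
    filter_upwards [htY] with ω hω
    rw [Real.norm_eq_abs, Real.abs_exp]
    exact Real.exp_le_exp.2 ((le_abs_self _).trans hω)
  have hY_int : Integrable Y μ := Integrable.of_bound hYm M hY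
  have hrepr : mgf Y μ t - 1 - t * μ[Y] = ∫ ω, (Real.exp (t * Y ω) - 1 - t * Y ω) ∂μ := by
    rw [integral_sub (f := fun ω ↦ Real.exp (t * Y ω) - 1) (hexp_int.sub (integrable_const 1))
      (hY_int.const_mul t), integral_sub (g := fun _ ↦ (1 : ℝ)) hexp_int (integrable_const 1),
      integral_const_mul]
    simp [mgf]
  rw [hrepr, ← Real.norm_eq_abs]
  refine (norm_integral_le_of_norm_le_const (C := (|t| * M) ^ 2) ?_).trans_eq (by simp)
  filter_upwards [htY] with ω hω
  rw [Real.norm_eq_abs]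
  calc |Real.exp (t * Y ω) - 1 - t * Y ω| ≤ (t * Y ω) ^ 2 :=
        Real.abs_exp_sub_one_sub_id_le (hω.trans ht)
    _ = |t * Y ω| ^ 2 := (sq_abs _).symm
    _ ≤ (|t| * M) ^ 2 := pow_le_pow_left₀ (abs_nonneg _) hω 2

lemma tendsto_mgf_inv_natCast_pow [IsProbabilityMeasure μ] {Y : Ω → ℝ}
    (hYm : AEStronglyMeasurable Y μ) {M : ℝ} (hY : ∀ᵐ ω ∂μ, |Y ω| ≤ M) :
    Tendsto (fun p : ℕ ↦ mgf Y μ (p : ℝ)⁻¹ ^ p) atTop (𝓝 (Real.exp μ[Y])) := by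
  have hbound : ∀ᶠ p : ℕ in atTop, ‖p * (mgf Y μ (p : ℝ)⁻¹ - 1) - μ[Y]‖ ≤ M ^ 2 / p := by
    filter_upwards [eventually_gt_atTop 0, tendsto_natCast_atTop_atTop.eventually_ge_atTop M]
      with p hp hMp
    have hp' : (0 : ℝ) < p := Nat.cast_pos.2 hp
    have hpM : |(p : ℝ)⁻¹| * M ≤ 1 := by
      rw [abs_inv, Nat.abs_cast, inv_mul_le_one₀ hp']
      exact hMp
    calc ‖p * (mgf Y μ (p : ℝ)⁻¹ - 1) - μ[Y]‖
        = p * |mgf Y μ (p : ℝ)⁻¹ - 1 - (p : ℝ)⁻¹ * μ[Y]| := by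
          rw [Real.norm_eq_abs, ← abs_of_pos hp', ← abs_mul, abs_of_pos hp']
          congr 1
          field_simp
      _ ≤ p * (|(p : ℝ)⁻¹| * M) ^ 2 :=
          mul_le_mul_of_nonneg_left (abs_mgf_sub_one_sub_mul_integral_le hYm hY hpM) hp'.le
      _ = M ^ 2 / p := by
          rw [abs_inv, Nat.abs_cast]
          field_simp
  have hlim : Tendsto (fun p : ℕ ↦ p * (mgf Y μ (p : ℝ)⁻¹ - 1)) atTop (𝓝 μ[Y]) :=
    tendsto_iff_norm_sub_tendsto_zero.2 <| squeeze_zero' (.of_forall fun _ ↦ norm_nonneg _)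
      hbound (tendsto_const_div_atTop_nhds_zero_nat _)
  simpa using Real.tendsto_one_add_pow_exp_of_tendsto hlim

end

lemma abs_sum_mul_le_sum_abs_of_abs_le_one {ι : Type*} (s : Finset ι) (t g : ι → ℝ)
    (hg : ∀ k, |g k| ≤ 1) : |∑ k ∈ s, t k * g k| ≤ ∑ k ∈ s, |t k| := by
  refine (Finset.abs_sum_le_sum_abs _ _).trans (Finset.sum_le_sum fun k _ ↦ ?_)
  rw [abs_mul]
  exact mul_le_of_le_one_right (abs_nonneg _) (hg k)

theorem network_charfun_tendsto_stable_general
    (n : ℕ) (α ν : ℝ) (hα₀ : 0 < α)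
    (t : Fin n → ℝ)
    (Ω : ℕ → Type*) (mΩ : ∀ p, MeasurableSpace (Ω p))
    (P : ∀ p, Measure (Ω p))
    (Ω₀ : Type*) [MeasurableSpace Ω₀] (P₀ : Measure Ω₀) [IsProbabilityMeasure P₀]
    (G₀ : Ω₀ → Fin n → ℝ) (hG₀meas : Measurable G₀)
    (w : ∀ p : ℕ, Fin p → Ω p → ℝ) (G : ∀ p : ℕ, Fin p → Ω p → Fin n → ℝ)
    (hwmeas : ∀ p j, Measurable (w p j)) (hGmeas : ∀ p j, Measurable (G p j))
    (hGbd : ∀ p j ω k, |G p j ω k| ≤ 1)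
    (hGlaw : ∀ p (j : Fin p), Measure.map (G p j) (P p) = Measure.map G₀ P₀)
    (hindep : ∀ p, iIndepFun
      (β := fun i : Fin p ⊕ Fin p => Sum.elim (fun _ => ℝ) (fun _ => Fin n → ℝ) i)
      (m := fun i => i.casesOn (fun _ => (inferInstance : MeasurableSpace ℝ))
        (fun _ => (inferInstance : MeasurableSpace (Fin n → ℝ))))
      (fun i => i.casesOn (w p) (G p)) (P p))
    (hwchar : ∀ p (j : Fin p) (u : ℝ),
      ∫ ω, Complex.exp (Complex.I * (u : ℂ) * (w p j ω : ℂ)) ∂(P p) =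
        ((Real.exp (-((ν / 2) ^ (α / 2) / (p : ℝ) * |u| ^ α)) : ℝ) : ℂ)) :
    Tendsto (fun p : ℕ =>
        ∫ ω, Complex.exp
          (Complex.I * ((∑ k, t k * ∑ j, w p j ω * G p j ω k : ℝ) : ℂ)) ∂(P p))
      atTop
      (nhds (((Real.exp (-((ν / 2) ^ (α / 2) *
        ∫ ω, |∑ k, t k * G₀ ω k| ^ α ∂P₀)) : ℝ) : ℂ))) := by
  set c := (ν / 2) ^ (α / 2)
  let proj : (Fin n → ℝ) → ℝ := fun g ↦ ∑ k, t k * g k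
  let Y : Ω₀ → ℝ := fun ω ↦ -(c * |proj (G₀ ω)| ^ α)
  have hident (p : ℕ) (j : Fin p) : IdentDistrib (G p j) G₀ (P p) P₀ :=
    ⟨(hGmeas p j).aemeasurable, hG₀meas.aemeasurable, hGlaw p j⟩
  have width (p : ℕ) : ∫ ω, Complex.exp
      (Complex.I * ((∑ k, t k * ∑ j, w p j ω * G p j ω k : ℝ) : ℂ)) ∂(P p) =
      ↑(mgf Y P₀ (p : ℝ)⁻¹ ^ p) := by
    have hWG : IndepFun (fun ω j ↦ w p j ω) (fun ω j ↦ G p j ω) (P p) :=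
      iIndepFun.indepFun_sum_inl_inr (hindep p) (by rintro (j | j); exacts [hwmeas p j, hGmeas p j])
    have h := integral_cexp_sum_mul_comp_eq_pow (hwmeas p) (hGmeas p) (s := proj) (by fun_prop)
      (by fun_prop) ((hindep p).precomp (g := Sum.inl) Sum.inl_injective)
      ((hindep p).precomp (g := Sum.inr) Sum.inr_injective) hWG (hident p) (hwchar p)
    rw [Fintype.card_fin] at h
    convert h using 4 with ω
    · simp only [proj, Finset.mul_sum]
      rw [Finset.sum_comm]
      simp only [mul_left_comm]
    · simp only [mgf, Y]
      ring_nf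
  have hG₀_bdd : ∀ᵐ ω ∂P₀, ∀ k, |G₀ ω k| ≤ 1 :=
    (hident 1 0).ae_snd (p := fun g ↦ ∀ k, |g k| ≤ 1) (by measurability) (ae_of_all _ (hGbd 1 0))
  have hY_bdd : ∀ᵐ ω ∂P₀, |Y ω| ≤ |c| * (∑ k, |t k|) ^ α := by
    filter_upwards [hG₀_bdd] with ω hω
    rw [abs_neg, abs_mul, abs_of_nonneg (Real.rpow_nonneg (abs_nonneg _) α)]
    exact mul_le_mul_of_nonneg_left (Real.rpow_le_rpow (abs_nonneg _)
      (abs_sum_mul_le_sum_abs_of_abs_le_one _ _ _ hω) hα₀.le) (abs_nonneg c)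
  have hlim := (tendsto_mgf_inv_natCast_pow (by fun_prop) hY_bdd).ofReal
  rw [integral_neg, integral_const_mul] at hlim
  simpa only [width] using hlim

/-- Proposition 1 (Der and Lee) in characteristic-function form: as the width `p → ∞`,
the characteristic function of the output of a one-hidden-layer network with i.i.d.
symmetric α-stable hidden-to-output weights of scale `(ν/2)^{1/2} p^{−1/α}` and i.i.d.
bounded hidden features with common law that of `G₀` converges to the symmetric α-stable
characteristic function `exp(−(ν/2)^{α/2} E[|⟨t,G₀⟩|^α])`. -/
theorem network_charfun_tendsto_stable
    (n : ℕ) (hn : 0 < n) (α ν : ℝ) (hα₀ : 0 < α) (hα₂ : α ≤ 2) (hν : 0 < ν)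
    (t : Fin n → ℝ)
    (Ω : ℕ → Type*) (mΩ : ∀ p, MeasurableSpace (Ω p))
    (P : ∀ p, Measure (Ω p)) (hP : ∀ p, IsProbabilityMeasure (P p))
    (Ω₀ : Type*) [MeasurableSpace Ω₀] (P₀ : Measure Ω₀) [IsProbabilityMeasure P₀]
    (G₀ : Ω₀ → Fin n → ℝ) (hG₀meas : Measurable G₀)
    (w : ∀ p : ℕ, Fin p → Ω p → ℝ) (G : ∀ p : ℕ, Fin p → Ω p → Fin n → ℝ)
    (hwmeas : ∀ p j, Measurable (w p j)) (hGmeas : ∀ p j, Measurable (G p j))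
    (hGbd : ∀ p j ω k, |G p j ω k| ≤ 1)
    (hGlaw : ∀ p (j : Fin p), Measure.map (G p j) (P p) = Measure.map G₀ P₀)
    (hindep : ∀ p, iIndepFun
      (β := fun i : Fin p ⊕ Fin p => Sum.elim (fun _ => ℝ) (fun _ => Fin n → ℝ) i)
      (m := fun i => i.casesOn (fun _ => (inferInstance : MeasurableSpace ℝ))
        (fun _ => (inferInstance : MeasurableSpace (Fin n → ℝ))))
      (fun i => i.casesOn (w p) (G p)) (P p))
    (hwchar : ∀ p (j : Fin p) (u : ℝ),
      ∫ ω, Complex.exp (Complex.I * (u : ℂ) * (w p j ω : ℂ)) ∂(P p) =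
        ((Real.exp (-((ν / 2) ^ (α / 2) / (p : ℝ) * |u| ^ α)) : ℝ) : ℂ)) :
    Tendsto (fun p : ℕ =>
        ∫ ω, Complex.exp
          (Complex.I * ((∑ k, t k * ∑ j, w p j ω * G p j ω k : ℝ) : ℂ)) ∂(P p))
      atTop
      (nhds (((Real.exp (-((ν / 2) ^ (α / 2) *
        ∫ ω, |∑ k, t k * G₀ ω k| ^ α ∂P₀)) : ℝ) : ℂ))) :=
  network_charfun_tendsto_stable_general n α ν hα₀ t Ω mΩ P Ω₀ P₀ G₀ hG₀meas w G hwmeas hGmeas hGbd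
    hGlaw hindep hwchar
end

section
/- Let n ≥ 1 and let x_1 < x_2 < ⋯ < x_n be real numbers. Then the set of vectors v ∈ {−1,+1}^n for which there exist real numbers b and w with b + w·x_j ≠ 0 and v_j = sign(b + w·x_j) for every j ∈ {1,…,n} has exactly 2n elements. -/
/-!
For `w ≥ 0` the map `j ↦ b + w·xⱼ` is monotone, so its sign pattern is `-1` on an initial segment
and `+1` afterwards; for `w < 0` it is the negative of such a pattern. Indexing a pattern by its
first `+1` entry `t`, the realizable patterns are exactly the `n` steps `step t` and their `n`
negatives `-step t` (the constant `-1` pattern being `-step 0`), and a step is never the negative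
of a step, since both are `+1` at the later of their two jumps. Conversely every step is realized
by a threshold strictly between `x (t - 1)` and `x t`.
-/

open Function Filter Topology Set

lemma StrictMono.exists_threshold {ι : Type*} [LinearOrder ι] [Finite ι] {x : ι → ℝ}
    (hx : StrictMono x) (t : ι) : ∃ c, ∀ j, (j < t → x j < c) ∧ (t ≤ j → c < x j) := by
  have hbelow : ∀ᶠ c in 𝓝[<] x t, c < x t ∧ ∀ j, j < t → x j < c := by
    refine (eventually_nhdsWithin_of_forall fun _ hc => hc).and (eventually_all.2 fun j => ?_)
    by_cases hjt : j < t
    · exact ((eventually_gt_nhds (hx hjt)).filter_mono nhdsWithin_le_nhds).mono fun _ hc _ => hc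
    · exact .of_forall fun _ hj => absurd hj hjt
  obtain ⟨c, hct, hc⟩ := hbelow.exists
  exact ⟨c, fun j => ⟨hc j, fun htj => hct.trans_le (hx.monotone htj)⟩⟩

namespace SignPattern

variable {n : ℕ}

def step (t : Fin n) : Fin n → ℝ := fun j => if j < t then -1 else 1

lemma step_injective : Injective (step (n := n)) := by
  have le_of_step_eq : ∀ {s t : Fin n}, step s = step t → s ≤ t := fun {s t} h => by
    by_contra! hts
    have := congrFun h t
    simp [step, hts] at this
    norm_num at this
  exact fun s t h => le_antisymm (le_of_step_eq h) (le_of_step_eq h.symm)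

lemma step_ne_neg_step (s t : Fin n) : step s ≠ -step t := by
  intro h
  have := congrFun h (max s t)
  simp [step] at this
  norm_num at this

variable (n) in
def stepPatterns : Set (Fin n → ℝ) := range step ∪ range fun t => -step t

variable (n) in
lemma ncard_stepPatterns : (stepPatterns n).ncard = 2 * n := by
  have hdisj : Disjoint (range (step (n := n))) (range fun t => -step t) := by
    rw [Set.disjoint_right]
    rintro _ ⟨t, rfl⟩ ⟨s, hs⟩
    exact step_ne_neg_step s t hs
  rw [stepPatterns, ncard_union_eq hdisj, ncard_range_of_injective step_injective,
    ncard_range_of_injective (f := fun t => -step t) (neg_injective.comp step_injective),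
    Nat.card_eq_fintype_card, Fintype.card_fin, two_mul]

lemma neg_mem_stepPatterns {v : Fin n → ℝ} (hv : v ∈ stepPatterns n) : -v ∈ stepPatterns n := by
  rcases hv with ⟨t, rfl⟩ | ⟨t, rfl⟩
  · exact Or.inr ⟨t, rfl⟩
  · exact Or.inl ⟨t, (neg_neg _).symm⟩

lemma sign_comp_mem_stepPatterns (hn : 0 < n) {f : Fin n → ℝ} (hf : Monotone f)
    (hf₀ : ∀ j, f j ≠ 0) : (fun j => Real.sign (f j)) ∈ stepPatterns n := by
  by_cases hpos : ∃ j, 0 < f j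
  · classical
    obtain ⟨j₀, hj₀⟩ := hpos
    obtain ⟨t, ht, hmin⟩ :=
      (Finset.univ.filter fun j => 0 < f j).exists_min_image id ⟨j₀, by simpa using hj₀⟩
    simp only [Finset.mem_filter, Finset.mem_univ, true_and, id] at ht hmin
    refine Or.inl ⟨t, funext fun j => ?_⟩
    by_cases hjt : j < t
    · have hj : f j < 0 := (hf₀ j).lt_of_le <| not_lt.1 fun hj => (hmin j hj).not_gt hjt
      simp [step, hjt, Real.sign_of_neg hj]
    · simp [step, hjt, Real.sign_of_pos (ht.trans_le (hf (not_lt.1 hjt)))]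
  · push Not at hpos
    refine Or.inr ⟨⟨0, hn⟩, funext fun j => ?_⟩
    simp [step, Fin.lt_def, Real.sign_of_neg ((hpos j).lt_of_ne (hf₀ j))]

def realizable (x : Fin n → ℝ) : Set (Fin n → ℝ) :=
  {v | (∀ j, v j = 1 ∨ v j = -1) ∧
    ∃ b w : ℝ, ∀ j, b + w * x j ≠ 0 ∧ v j = Real.sign (b + w * x j)}

variable {x : Fin n → ℝ}

lemma mem_realizable_iff {v : Fin n → ℝ} :
    v ∈ realizable x ↔ ∃ b w : ℝ, ∀ j, b + w * x j ≠ 0 ∧ v j = Real.sign (b + w * x j) := by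
  refine ⟨And.right, fun ⟨b, w, h⟩ => ⟨fun j => ?_, b, w, h⟩⟩
  rw [(h j).2]
  exact (Real.sign_apply_eq_of_ne_zero _ (h j).1).symm

lemma neg_mem_realizable {v : Fin n → ℝ} (hv : v ∈ realizable x) : -v ∈ realizable x := by
  obtain ⟨b, w, h⟩ := mem_realizable_iff.1 hv
  refine mem_realizable_iff.2 ⟨-b, -w, fun j => ?_⟩
  have hneg : -b + -w * x j = -(b + w * x j) := by ring
  rw [hneg, Real.sign_neg, Pi.neg_apply, (h j).2]
  exact ⟨neg_ne_zero.2 (h j).1, rfl⟩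

lemma step_mem_realizable (hx : StrictMono x) (t : Fin n) : step t ∈ realizable x := by
  obtain ⟨c, hc⟩ := hx.exists_threshold t
  refine mem_realizable_iff.2 ⟨-c, 1, fun j => ?_⟩
  by_cases hjt : j < t
  · have hj : -c + 1 * x j < 0 := by linarith [(hc j).1 hjt]
    refine ⟨hj.ne, ?_⟩
    rw [Real.sign_of_neg hj]
    simp [step, hjt]
  · have hj : 0 < -c + 1 * x j := by linarith [(hc j).2 (not_lt.1 hjt)]
    refine ⟨hj.ne', ?_⟩
    rw [Real.sign_of_pos hj]
    simp [step, hjt]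

lemma stepPatterns_subset_realizable (hx : StrictMono x) : stepPatterns n ⊆ realizable x := by
  rintro _ (⟨t, rfl⟩ | ⟨t, rfl⟩)
  · exact step_mem_realizable hx t
  · exact neg_mem_realizable (step_mem_realizable hx t)

lemma realizable_subset_stepPatterns (hn : 0 < n) (hx : Monotone x) :
    realizable x ⊆ stepPatterns n := by
  intro v hv
  obtain ⟨b, w, h⟩ := mem_realizable_iff.1 hv
  have hv : v = fun j => Real.sign (b + w * x j) := funext fun j => (h j).2
  rcases le_or_gt 0 w with hw | hw
  · rw [hv]
    exact sign_comp_mem_stepPatterns hn (fun i j hij => by gcongr; exact hx hij) fun j => (h j).1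
  · have hmono : Monotone fun j => -(b + w * x j) := fun i j hij => by nlinarith [hx hij]
    have hsign : v = -fun j => Real.sign (-(b + w * x j)) := by
      rw [hv]
      funext j
      rw [Pi.neg_apply, Real.sign_neg, neg_neg]
    rw [hsign]
    exact neg_mem_stepPatterns
      (sign_comp_mem_stepPatterns hn hmono fun j => neg_ne_zero.2 (h j).1)

end SignPattern

/-- One-dimensional count of hyperplane partitions: for ordered inputs `x₁ < ⋯ < xₙ`,
there are exactly `2n` realizable sign patterns `vⱼ = sign(b + w·xⱼ)`. -/
theorem card_realizable_sign_patterns_one_dim (n : ℕ) (hn : 1 ≤ n)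
    (x : Fin n → ℝ) (hx : StrictMono x) :
    {v : Fin n → ℝ | (∀ j, v j = 1 ∨ v j = -1) ∧
      ∃ b w : ℝ, ∀ j, b + w * x j ≠ 0 ∧ v j = Real.sign (b + w * x j)}.ncard = 2 * n := by
  change (SignPattern.realizable x).ncard = 2 * n
  rw [(SignPattern.realizable_subset_stepPatterns hn hx.monotone).antisymm
    (SignPattern.stepPatterns_subset_realizable hx), SignPattern.ncard_stepPatterns]
end
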